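/- arXiv:2211.13122 — 2 statements merged into one kernel-verified Lean document; each statement's English description precedes it below -/
import Mathlib

section
/- Let v ∈ ℝ³ with first coordinate v₁ = 0 and let κ ∈ ℝ. Then ∫_{θ=−π/2}^{π/2} ∫_{φ=−π/2}^{π/2} exp(iκ ⟨d(θ, φ), v⟩) · (cos θ)/(2π) dφ dθ = sinc(κ‖v‖). In particular, for a planar array whose element positions u_1, …, u_N all lie in the y–z plane (first coordinate zero), the spatial correlation of an isotropic half-space scattering environment between elements m and n equals sinc(κ‖u_m − u_n‖). -/
open Real MeasureTheory RealInnerProductSpace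

/-- `sinc x = sin x / x` for `x ≠ 0`, and `sinc 0 = 1`. -/
noncomputable def sinc (x : ℝ) : ℝ := if x = 0 then 1 else Real.sin x / x

/-- Unit direction vector `d(θ, φ) = (cos θ cos φ, cos θ sin φ, sin θ) ∈ ℝ³`. -/
noncomputable def dirVec (θ φ : ℝ) : EuclideanSpace ℝ (Fin 3) :=
  (WithLp.equiv 2 (Fin 3 → ℝ)).symm
    ![Real.cos θ * Real.cos φ, Real.cos θ * Real.sin φ, Real.sin θ]

/-- Half-space average of a plane wave over the isotropic density `cos θ / (2π)`,
seen at displacement `v`. -/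
noncomputable def halfSpaceCorr (κ : ℝ) (v : EuclideanSpace ℝ (Fin 3)) : ℂ :=
  ∫ θ in Set.Icc (-(π / 2)) (π / 2),
    ∫ φ in Set.Icc (-(π / 2)) (π / 2),
      Complex.exp (Complex.I * κ * (⟪dirVec θ φ, v⟫ : ℝ)) * ((Real.cos θ) / (2 * π))

/-!
Substituting `s = sin θ`, `t = cos θ sin φ` projects the half-space of directions onto the unit
disk of the array plane (modelled as `ℂ`, `z = s + t i`) and turns `cos θ dθ dφ` into
`ds dt / √(1 - s² - t²)`. As `v₁ = 0`, the phase is `κ ⟪z, v₃ + v₂ i⟫`. The weight is radial,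
so a reflection of the plane replaces `v₃ + v₂ i` by `‖v‖`; the phase then no longer depends
on `t`, the `t`-integral of the weight is `π`, and
`(2π)⁻¹ π ∫₋₁¹ exp (i κ ‖v‖ s) ds = sinc (κ ‖v‖)`.
-/

open Set

section ArcsineSubstitution

variable {E : Type*} [NormedAddCommGroup E] [NormedSpace ℝ E]

/- `√` of a negative number is `0` and `0⁻¹ = 0`, so the weight `(√(d - t ^ 2))⁻¹` vanishes
outside `(-√d, √d)`: the integrals over `ℝ` below are integrals over that interval (or disk). -/
lemma inv_sqrt_sub_sq_eq_zero {d t : ℝ} (h : d ≤ t ^ 2) : (√(d - t ^ 2))⁻¹ = 0 := by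
  rw [sqrt_eq_zero_of_nonpos (sub_nonpos.2 h), inv_zero]

lemma image_mul_sin_Ioo {c : ℝ} (hc : 0 < c) :
    (fun φ => c * sin φ) '' Ioo (-(π / 2)) (π / 2) = Ioo (-c) c := by
  have h := image_mul_left_Ioo hc (-1) 1
  rw [mul_neg_one, mul_one] at h
  rw [← h, ← image_image (fun x => c * x) sin]
  exact congrArg _ sinPartialHomeomorph.image_source_eq_target

lemma integral_Ioo_eq_integral_mul_sin {c : ℝ} (hc : 0 < c) (g : ℝ → E) :
    ∫ t in Ioo (-c) c, g t = ∫ φ in Ioo (-(π / 2)) (π / 2), (c * cos φ) • g (c * sin φ) := by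
  rw [← image_mul_sin_Ioo hc, integral_image_eq_integral_abs_deriv_smul measurableSet_Ioo
    (fun φ _ => ((hasDerivAt_sin φ).const_mul c).hasDerivWithinAt)
    ((mul_right_injective₀ hc.ne').comp_injOn sinPartialHomeomorph.injOn) g]
  refine setIntegral_congr_fun measurableSet_Ioo fun φ hφ => ?_
  rw [abs_of_pos (mul_pos hc (cos_pos_of_mem_Ioo hφ))]

lemma integral_comp_sqrt_mul_sin {d : ℝ} (hd : 0 < d) (F : ℝ → E) :
    ∫ φ in Ioo (-(π / 2)) (π / 2), F (√d * sin φ) = ∫ t, (√(d - t ^ 2))⁻¹ • F t := by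
  have hc : 0 < √d := sqrt_pos.2 hd
  rw [← setIntegral_eq_integral_of_forall_compl_eq_zero (s := Ioo (-√d) √d)
    (f := fun t => (√(d - t ^ 2))⁻¹ • F t) fun t ht => ?_,
    integral_Ioo_eq_integral_mul_sin hc]
  · refine setIntegral_congr_fun measurableSet_Ioo fun φ hφ => ?_
    have hpos : 0 < √d * cos φ := mul_pos hc (cos_pos_of_mem_Ioo hφ)
    have hsqrt : √(d - (√d * sin φ) ^ 2) = √d * cos φ := by
      rw [mul_pow, sq_sqrt hd.le, ← sqrt_sq hpos.le, mul_pow, sq_sqrt hd.le, cos_sq', mul_one_sub]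
    rw [hsqrt, smul_inv_smul₀ hpos.ne']
  · have : d ≤ t ^ 2 := by
      rw [← sq_sqrt hd.le, sq_le_sq, abs_of_pos hc]
      exact le_of_not_gt fun h => ht (abs_lt.1 h)
    rw [inv_sqrt_sub_sq_eq_zero this, zero_smul]

lemma integral_inv_sqrt_sub_sq (d : ℝ) :
    ∫ t, (√(d - t ^ 2))⁻¹ = if 0 < d then π else 0 := by
  split_ifs with hd
  · have h := integral_comp_sqrt_mul_sin hd fun _ => (1 : ℝ)
    simp only [smul_eq_mul, mul_one, setIntegral_const, volume_real_Ioo] at h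
    rw [← h, max_eq_left (by linarith [pi_pos])]
    ring
  · simp [inv_sqrt_sub_sq_eq_zero ((not_lt.1 hd).trans (sq_nonneg _))]

lemma integrable_inv_sqrt_sub_sq (d : ℝ) : Integrable fun t : ℝ => (√(d - t ^ 2))⁻¹ := by
  by_cases hd : 0 < d
  · exact .of_integral_ne_zero (by simp [integral_inv_sqrt_sub_sq, hd, pi_ne_zero])
  · simp [inv_sqrt_sub_sq_eq_zero ((not_lt.1 hd).trans (sq_nonneg _))]

end ArcsineSubstitution

lemma integrable_inv_sqrt_one_sub_sq_sub_sq :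
    Integrable fun q : ℝ × ℝ => (√(1 - q.1 ^ 2 - q.2 ^ 2))⁻¹ := by
  rw [Measure.volume_eq_prod, integrable_prod_iff (by fun_prop)]
  refine ⟨.of_forall fun s => integrable_inv_sqrt_sub_sq (1 - s ^ 2), ?_⟩
  have : (fun s : ℝ => if 0 < 1 - s ^ 2 then π else 0) = (Ioo (-1) 1).indicator fun _ => π := by
    ext s
    simp [indicator_apply, sub_pos, sq_lt_one_iff_abs_lt_one, abs_lt]
  simp only [norm_inv, norm_of_nonneg (sqrt_nonneg _), integral_inv_sqrt_sub_sq, this]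
  exact (integrable_indicator_iff measurableSet_Ioo).2 (integrableOn_const measure_Ioo_lt_top.ne)

lemma integral_complex_inv_sqrt_smul_eq_integral_integral {G : Type*} [NormedAddCommGroup G]
    [NormedSpace ℝ G] {h : ℂ → G} (hh : Continuous h) {C : ℝ} (hC : ∀ z, ‖h z‖ ≤ C) :
    ∫ z : ℂ, (√(1 - ‖z‖ ^ 2))⁻¹ • h z = ∫ s, ∫ t, (√(1 - s ^ 2 - t ^ 2))⁻¹ • h ⟨s, t⟩ := by
  have hint : Integrable fun q : ℝ × ℝ => (√(1 - q.1 ^ 2 - q.2 ^ 2))⁻¹ • h ⟨q.1, q.2⟩ :=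
    integrable_inv_sqrt_one_sub_sq_sub_sq.smul_bdd C
      (hh.comp_aestronglyMeasurable
        Complex.measurableEquivRealProd.symm.measurable.aestronglyMeasurable)
      (.of_forall fun _ => hC _)
  calc _ = ∫ q : ℝ × ℝ, (√(1 - q.1 ^ 2 - q.2 ^ 2))⁻¹ • h ⟨q.1, q.2⟩ := by
        rw [← Complex.volume_preserving_equiv_real_prod.symm.integral_comp']
        refine integral_congr_ae (.of_forall fun q => ?_)
        simp only [Complex.measurableEquivRealProd_symm_apply]
        rw [Complex.sq_norm, Complex.normSq_mk, sub_sub, ← sq, ← sq]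
    _ = _ := by
        rw [Measure.volume_eq_prod] at hint ⊢
        exact integral_prod _ hint

lemma integral_cos_smul_integral_eq_integral_integral {E : Type*} [NormedAddCommGroup E]
    [NormedSpace ℝ E] (P : ℝ → ℝ → E) :
    ∫ θ in Ioo (-(π / 2)) (π / 2), cos θ • ∫ φ in Ioo (-(π / 2)) (π / 2), P (sin θ) (cos θ * sin φ)
      = ∫ s, ∫ t, (√(1 - s ^ 2 - t ^ 2))⁻¹ • P s t := by
  have hslice : ∀ θ ∈ Ioo (-(π / 2)) (π / 2), ∫ φ in Ioo (-(π / 2)) (π / 2),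
      P (sin θ) (cos θ * sin φ) = ∫ t, (√(1 - sin θ ^ 2 - t ^ 2))⁻¹ • P (sin θ) t := by
    intro θ hθ
    rw [cos_eq_sqrt_one_sub_sin_sq hθ.1.le hθ.2.le]
    exact integral_comp_sqrt_mul_sin (by nlinarith [sin_sq_add_cos_sq θ, cos_pos_of_mem_Ioo hθ]) _
  have hsub := integral_Ioo_eq_integral_mul_sin one_pos
    fun s => ∫ t, (√(1 - s ^ 2 - t ^ 2))⁻¹ • P s t
  simp only [one_mul] at hsub
  rw [setIntegral_congr_fun measurableSet_Ioo fun θ hθ => by rw [hslice θ hθ], ← hsub,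
    setIntegral_eq_integral_of_forall_compl_eq_zero fun s hs => ?_]
  have hs1 : 1 ≤ s ^ 2 := by
    rw [one_le_sq_iff_one_le_abs]
    exact le_of_not_gt fun h => hs (abs_lt.1 h)
  have hzero : ∀ t : ℝ, (√(1 - s ^ 2 - t ^ 2))⁻¹ = 0 :=
    fun t => inv_sqrt_sub_sq_eq_zero (by nlinarith [sq_nonneg t])
  simp [hzero]

lemma integral_norm_inner_eq_of_norm_eq {E G : Type*} [NormedAddCommGroup E]
    [InnerProductSpace ℝ E] [FiniteDimensional ℝ E] [MeasurableSpace E] [BorelSpace E]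
    [NormedAddCommGroup G] [NormedSpace ℝ G] (F : ℝ → ℝ → G) {w w' : E} (h : ‖w‖ = ‖w'‖) :
    ∫ x, F ‖x‖ ⟪x, w⟫ = ∫ x, F ‖x‖ ⟪x, w'⟫ := by
  set R := (ℝ ∙ (w - w'))ᗮ.reflection
  have hR : R w = w' := Submodule.reflection_sub h
  calc ∫ x, F ‖x‖ ⟪x, w⟫ = ∫ x, F ‖R x‖ ⟪R x, w'⟫ := by
        simp only [← hR, LinearIsometryEquiv.norm_map, LinearIsometryEquiv.inner_map_map]
    _ = ∫ x, F ‖x‖ ⟪x, w'⟫ :=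
        R.measurePreserving.integral_comp R.toHomeomorph.measurableEmbedding fun x => F ‖x‖ ⟪x, w'⟫

lemma integral_Ioo_neg_one_one_exp_I_mul (x : ℝ) :
    ∫ s in Ioo (-1 : ℝ) 1, Complex.exp (Complex.I * ↑(x * s)) = 2 * (_root_.sinc x : ℂ) := by
  rw [← integral_Ioc_eq_integral_Ioo, ← intervalIntegral.integral_of_le (by norm_num)]
  rcases eq_or_ne x 0 with rfl | hx
  · norm_num [_root_.sinc]
  have hc : Complex.I * x ≠ 0 := mul_ne_zero Complex.I_ne_zero (Complex.ofReal_ne_zero.2 hx)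
  simp only [Complex.ofReal_mul, ← mul_assoc]
  rw [integral_exp_mul_complex hc, _root_.sinc, if_neg hx, Complex.ofReal_div, Complex.ofReal_sin,
    Complex.sin]
  push_cast
  field_simp
  rw [Complex.I_sq]
  ring

open Complex in
lemma norm_exp_I_mul_ofReal_mul_ofReal (κ x : ℝ) : ‖exp (I * κ * x)‖ = 1 := by
  rw [← norm_exp_ofReal_mul_I (κ * x)]
  push_cast
  ring_nf

open Complex in
lemma integral_complex_inv_sqrt_smul_exp_inner_ofReal (κ r : ℝ) :
    ∫ z : ℂ, (√(1 - ‖z‖ ^ 2))⁻¹ • exp (I * κ * ⟪z, (r : ℂ)⟫) =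
      2 * π * (_root_.sinc (κ * r) : ℂ) := by
  rw [integral_complex_inv_sqrt_smul_eq_integral_integral (by fun_prop)
      (fun z => (norm_exp_I_mul_ofReal_mul_ofReal κ _).le)]
  have hslice : ∀ s : ℝ, ∫ t, (√(1 - s ^ 2 - t ^ 2))⁻¹ • exp (I * κ * ⟪(⟨s, t⟩ : ℂ), (r : ℂ)⟫)
      = (Ioo (-1) 1).indicator (fun s => (π : ℂ) * exp (I * ↑(κ * r * s))) s := by
    intro s
    have hinner : ∀ t : ℝ, ⟪(⟨s, t⟩ : ℂ), (r : ℂ)⟫ = r * s := fun t => by simp [Complex.inner]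
    have hmem : 0 < 1 - s ^ 2 ↔ s ∈ Ioo (-1) 1 := by
      simp [sub_pos, sq_lt_one_iff_abs_lt_one, abs_lt]
    simp only [hinner]
    rw [integral_smul_const, integral_inv_sqrt_sub_sq, indicator_apply]
    simp only [← hmem]
    split_ifs
    · rw [Complex.real_smul]; push_cast; ring_nf
    · rw [zero_smul]
  rw [integral_congr_ae (.of_forall hslice), integral_indicator measurableSet_Ioo,
    integral_const_mul, integral_Ioo_neg_one_one_exp_I_mul]
  ring

lemma inner_dirVec_of_apply_zero {v : EuclideanSpace ℝ (Fin 3)} (hv : v 0 = 0) (θ φ : ℝ) :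
    ⟪dirVec θ φ, v⟫ = ⟪(⟨sin θ, cos θ * sin φ⟩ : ℂ), ⟨v 2, v 1⟩⟫ := by
  simp only [dirVec, WithLp.equiv_symm_apply, PiLp.inner_apply, RCLike.inner_apply,
    conj_trivial, Fin.sum_univ_three, hv, Matrix.cons_val_zero, zero_mul, Matrix.cons_val_one,
    zero_add, Matrix.cons_val, Complex.inner, Complex.mul_re, Complex.conj_re, Complex.conj_im,
    mul_neg, sub_neg_eq_add]
  ring

lemma norm_complex_mk_of_apply_zero {v : EuclideanSpace ℝ (Fin 3)} (hv : v 0 = 0) :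
    ‖(⟨v 2, v 1⟩ : ℂ)‖ = ‖v‖ := by
  rw [← sq_eq_sq₀ (norm_nonneg _) (norm_nonneg _), Complex.sq_norm, Complex.normSq_mk,
    EuclideanSpace.real_norm_sq_eq, Fin.sum_univ_three, hv]
  ring

open Complex in
lemma halfSpaceCorr_eq_integral_complex (κ : ℝ) {v : EuclideanSpace ℝ (Fin 3)} (hv : v 0 = 0) :
    halfSpaceCorr κ v =
      (2 * π)⁻¹ • ∫ z : ℂ, (√(1 - ‖z‖ ^ 2))⁻¹ • exp (I * κ * ⟪z, ⟨v 2, v 1⟩⟫) := by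
  rw [integral_complex_inv_sqrt_smul_eq_integral_integral (by fun_prop)
      (fun z => (norm_exp_I_mul_ofReal_mul_ofReal κ _).le),
    ← integral_cos_smul_integral_eq_integral_integral, ← integral_smul, halfSpaceCorr,
    integral_Icc_eq_integral_Ioo]
  refine setIntegral_congr_fun measurableSet_Ioo fun θ _ => ?_
  rw [integral_Icc_eq_integral_Ioo, smul_smul, ← integral_smul]
  refine setIntegral_congr_fun measurableSet_Ioo fun φ _ => ?_
  rw [inner_dirVec_of_apply_zero hv, Complex.real_smul]
  push_cast
  ring

lemma halfSpaceCorr_eq_sinc_of_apply_zero (κ : ℝ) {v : EuclideanSpace ℝ (Fin 3)} (hv : v 0 = 0) :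
    halfSpaceCorr κ v = (_root_.sinc (κ * ‖v‖) : ℂ) := by
  have hw : ‖(⟨v 2, v 1⟩ : ℂ)‖ = ‖((‖v‖ : ℝ) : ℂ)‖ := by
    rw [norm_complex_mk_of_apply_zero hv, Complex.norm_real, norm_norm]
  rw [halfSpaceCorr_eq_integral_complex κ hv,
    integral_norm_inner_eq_of_norm_eq
      (fun r p => (√(1 - r ^ 2))⁻¹ • Complex.exp (Complex.I * κ * p)) hw,
    integral_complex_inv_sqrt_smul_exp_inner_ofReal, Complex.real_smul]
  push_cast
  field_simp

theorem halfspace_average_plane_wave_and_planar_array_correlation (κ : ℝ) :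
    (∀ v : EuclideanSpace ℝ (Fin 3), v 0 = 0 →
        halfSpaceCorr κ v = (_root_.sinc (κ * ‖v‖) : ℂ)) ∧
    (∀ (N : ℕ) (u : Fin N → EuclideanSpace ℝ (Fin 3)),
        (∀ i, u i 0 = 0) → ∀ m n : Fin N,
          halfSpaceCorr κ (u m - u n) = (_root_.sinc (κ * ‖u m - u n‖) : ℂ)) := by
  refine ⟨fun v hv => halfSpaceCorr_eq_sinc_of_apply_zero κ hv, fun N u hu m n => ?_⟩
  refine halfSpaceCorr_eq_sinc_of_apply_zero κ ?_
  rw [PiLp.sub_apply, hu m, hu n, sub_zero]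
end

section
/- Let (Ω, P) be a probability space and let Ψ = (θ, φ) be a random angle pair with joint density f(θ, φ) = cos(θ)/(2π) on θ, φ ∈ [−π/2, π/2]. Let u_1, …, u_N ∈ ℝ³ be element positions all having first coordinate zero, let λ > 0, κ = 2π/λ, and let a(Ψ) ∈ ℂ^N be the array steering vector. Then for all m, n, E[[a(Ψ)]_m · conj([a(Ψ)]_n)] = sinc(κ‖u_m − u_n‖). -/
/-!
Only the projection of `d(θ, φ)` to the plane `x₀ = 0` enters, since the element differences lie
in that plane. Substituting `y = cos θ sin φ` and then `z = sin θ` pushes the isotropic law on the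
hemisphere `x₀ ≥ 0` forward to the density `(1 - |w|²)^(-1/2)` on the unit disk of `ℂ`. This density
is rotation invariant, so its characteristic function at `v` depends only on `|v|`; for real
`v = r`, integrating out `Im w` gives `π` on every chord, leaving
`π ∫₋₁¹ exp(i r z) dz = 2π sinc r`.
-/

open Real MeasureTheory RealInnerProductSpace ProbabilityTheory

/-- Array steering vector: `[a(θ, φ)]_n = exp(i κ ⟨d(θ, φ), u_n⟩)`. -/
noncomputable def steering {N : ℕ} (κ : ℝ) (u : Fin N → EuclideanSpace ℝ (Fin 3))
    (θ φ : ℝ) (n : Fin N) : ℂ :=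
  Complex.exp (Complex.I * κ * (⟪dirVec θ φ, u n⟫ : ℝ))

open Set

theorem hasDerivAt_arcsin_div {w y : ℝ} (hy : y ∈ Ioo (-w) w) :
    HasDerivAt (fun y => arcsin (y / w)) (√(w ^ 2 - y ^ 2))⁻¹ y := by
  obtain ⟨hlo, hhi⟩ := hy
  have hw : 0 < w := by linarith
  have hlo' : -1 < y / w := by rwa [lt_div_iff₀ hw, neg_one_mul]
  have hhi' : y / w < 1 := by rwa [div_lt_one hw]
  refine ((hasDerivAt_arcsin hlo'.ne' hhi'.ne).comp y
    ((hasDerivAt_id y).div_const w)).congr_deriv ?_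
  have hsqrt : √(w ^ 2 - y ^ 2) = w * √(1 - (y / w) ^ 2) := by
    rw [← sqrt_sq hw.le, ← sqrt_mul (sq_nonneg w), sqrt_sq hw.le]
    congr 1
    field_simp
  rw [hsqrt, mul_inv]
  simp only [one_div]
  ring

theorem inv_sqrt_sq_sub_sq_eq_zero {w y : ℝ} (hw : 0 < w) (hy : y ∉ Ioo (-w) w) :
    (√(w ^ 2 - y ^ 2))⁻¹ = 0 := by
  rw [inv_eq_zero, sqrt_eq_zero']
  simp only [mem_Ioo, not_and_or, not_lt] at hy
  rcases hy with hy | hy <;> nlinarith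

theorem integrableOn_inv_sqrt_sq_sub_sq (w : ℝ) :
    IntegrableOn (fun y => (√(w ^ 2 - y ^ 2))⁻¹) (Ioo (-w) w) :=
  (intervalIntegral.integrableOn_deriv_of_nonneg
    (continuous_arcsin.comp (continuous_id.div_const w)).continuousOn
    (fun _ hy => hasDerivAt_arcsin_div hy) (fun _ _ => by positivity)).mono_set
    Ioo_subset_Ioc_self

theorem integrable_inv_sqrt_sq_sub_sq {w : ℝ} (hw : 0 < w) :
    Integrable (fun y => (√(w ^ 2 - y ^ 2))⁻¹) :=
  (integrableOn_inv_sqrt_sq_sub_sq w).integrable_of_forall_notMem_eq_zero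
    fun _ hy => inv_sqrt_sq_sub_sq_eq_zero hw hy

theorem integral_inv_sqrt_sq_sub_sq {w : ℝ} (hw : 0 < w) :
    ∫ y, (√(w ^ 2 - y ^ 2))⁻¹ = π := by
  have hle : -w ≤ w := by linarith
  rw [← setIntegral_eq_integral_of_forall_compl_eq_zero
      fun _ hy => inv_sqrt_sq_sub_sq_eq_zero hw hy,
    ← integral_Ioc_eq_integral_Ioo, ← intervalIntegral.integral_of_le hle,
    intervalIntegral.integral_eq_sub_of_hasDerivAt_of_le hle
      (continuous_arcsin.comp (continuous_id.div_const w)).continuousOn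
      (fun _ hy => hasDerivAt_arcsin_div hy)
      ((intervalIntegrable_iff_integrableOn_Ioo_of_le hle).2 (integrableOn_inv_sqrt_sq_sub_sq w))]
  simp only [Function.comp_apply, id, neg_div, div_self hw.ne', arcsin_neg, arcsin_one]
  ring

theorem integral_Ioo_exp_mul_I (r : ℝ) :
    ∫ z in Ioo (-1 : ℝ) 1, Complex.exp ((r * z : ℝ) * Complex.I) = 2 * (Real.sinc r : ℂ) := by
  rcases eq_or_ne r 0 with rfl | hr
  · norm_num
  have hc : (r : ℂ) * Complex.I ≠ 0 := mul_ne_zero (Complex.ofReal_ne_zero.2 hr) Complex.I_ne_zero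
  rw [← integral_Ioc_eq_integral_Ioo, ← intervalIntegral.integral_of_le (by norm_num)]
  simp_rw [Complex.ofReal_mul, mul_right_comm (r : ℂ) _ Complex.I]
  rw [integral_exp_mul_complex hc, Real.sinc_of_ne_zero hr]
  push_cast
  rw [Complex.sin]
  field_simp
  rw [Complex.I_sq]
  ring

/-- The vertical projection of the surface measure of a unit hemisphere onto the unit disk, as a
density on `ℂ`. It vanishes off the open disk, where the square root is `0` and `0⁻¹ = 0`. -/
noncomputable def hemisphereDensity (w : ℂ) : ℝ := (√(1 - ‖w‖ ^ 2))⁻¹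

theorem hemisphereDensity_nonneg (w : ℂ) : 0 ≤ hemisphereDensity w := by
  unfold hemisphereDensity; positivity

theorem measurable_hemisphereDensity : Measurable hemisphereDensity := by
  unfold hemisphereDensity; fun_prop

theorem hemisphereDensity_mk (z y : ℝ) :
    hemisphereDensity ⟨z, y⟩ = (√((1 - z ^ 2) - y ^ 2))⁻¹ := by
  rw [hemisphereDensity, Complex.sq_norm, Complex.normSq_mk]
  ring_nf

theorem hemisphereDensity_mk_of_mem {z : ℝ} (hz : z ∈ Ioo (-1) 1) (y : ℝ) :
    hemisphereDensity ⟨z, y⟩ = (√(√(1 - z ^ 2) ^ 2 - y ^ 2))⁻¹ := by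
  rw [hemisphereDensity_mk, sq_sqrt (by nlinarith [hz.1, hz.2])]

theorem sqrt_one_sub_sq_pos {z : ℝ} (hz : z ∈ Ioo (-1) 1) : 0 < √(1 - z ^ 2) :=
  sqrt_pos.2 (by nlinarith [hz.1, hz.2])

theorem hemisphereDensity_mk_of_notMem {z : ℝ} (hz : z ∉ Ioo (-1) 1) (y : ℝ) :
    hemisphereDensity ⟨z, y⟩ = 0 := by
  rw [hemisphereDensity_mk, inv_eq_zero, sqrt_eq_zero']
  simp only [mem_Ioo, not_and_or, not_lt] at hz
  rcases hz with hz | hz <;> nlinarith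

theorem integrable_hemisphereDensity_mk (z : ℝ) :
    Integrable fun y => hemisphereDensity ⟨z, y⟩ := by
  by_cases hz : z ∈ Ioo (-1) 1
  · simp_rw [hemisphereDensity_mk_of_mem hz]
    exact integrable_inv_sqrt_sq_sub_sq (sqrt_one_sub_sq_pos hz)
  · simp_rw [hemisphereDensity_mk_of_notMem hz]
    exact integrable_zero _ _ _

theorem integral_hemisphereDensity_mk (z : ℝ) :
    ∫ y, hemisphereDensity ⟨z, y⟩ = (Ioo (-1) 1).indicator (fun _ => π) z := by
  by_cases hz : z ∈ Ioo (-1) 1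
  · simp_rw [hemisphereDensity_mk_of_mem hz, indicator_of_mem hz]
    exact integral_inv_sqrt_sq_sub_sq (sqrt_one_sub_sq_pos hz)
  · simp_rw [hemisphereDensity_mk_of_notMem hz, indicator_of_notMem hz, integral_zero]

theorem integrable_complex_iff {E : Type*} [NormedAddCommGroup E] {f : ℂ → E} :
    Integrable f ↔ Integrable (fun p : ℝ × ℝ => f ⟨p.1, p.2⟩) :=
  (Complex.volume_preserving_equiv_real_prod.symm.integrable_comp_emb
    Complex.measurableEquivRealProd.symm.measurableEmbedding).symm

theorem integral_complex_eq_integral_integral {E : Type*} [NormedAddCommGroup E] [NormedSpace ℝ E]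
    {f : ℂ → E} (hf : Integrable f) : ∫ w, f w = ∫ x, ∫ y, f ⟨x, y⟩ := by
  rw [← Complex.volume_preserving_equiv_real_prod.symm.integral_comp',
    Measure.volume_eq_prod]
  exact integral_prod _ (integrable_complex_iff.1 hf)

theorem integrable_hemisphereDensity : Integrable hemisphereDensity := by
  rw [integrable_complex_iff, Measure.volume_eq_prod]
  refine (integrable_prod_iff (measurable_hemisphereDensity.comp
    Complex.measurableEquivRealProd.symm.measurable).aestronglyMeasurable).2
    ⟨.of_forall integrable_hemisphereDensity_mk, ?_⟩
  simp_rw [Function.comp_apply, Complex.measurableEquivRealProd_symm_apply,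
    Real.norm_of_nonneg (hemisphereDensity_nonneg _), integral_hemisphereDensity_mk]
  exact (integrable_indicator_iff measurableSet_Ioo).2 (integrableOn_const measure_Ioo_lt_top.ne)

theorem integrable_hemisphereDensity_smul_exp_mul_I {f : ℂ → ℝ} (hf : Measurable f) :
    Integrable fun w => hemisphereDensity w • Complex.exp (f w * Complex.I) :=
  integrable_hemisphereDensity.smul_bdd 1 (by fun_prop)
    (.of_forall fun w => (Complex.norm_exp_ofReal_mul_I _).le)

theorem integral_Ioo_mul_cos_smul_comp_mul_sin {E : Type*} [NormedAddCommGroup E] [NormedSpace ℝ E]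
    {c : ℝ} (hc : 0 < c) (h : ℝ → E) :
    ∫ φ in Ioo (-(π / 2)) (π / 2), (c * cos φ) • h (c * sin φ) = ∫ y in Ioo (-c) c, h y := by
  have himage : (c * sin ·) '' Ioo (-(π / 2)) (π / 2) = Ioo (-c) c := by
    have hsin : sin '' Ioo (-(π / 2)) (π / 2) = Ioo (-1) 1 := by
      simpa using sinPartialHomeomorph.image_source_eq_target
    rw [show (c * sin ·) = (c * ·) ∘ sin from rfl, image_comp, hsin, image_mul_left_Ioo hc,
      mul_neg_one, mul_one]
  rw [← himage, integral_image_eq_integral_abs_deriv_smul measurableSet_Ioo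
    (fun φ _ => ((hasDerivAt_sin φ).const_mul c).hasDerivWithinAt)
    ((mul_right_injective₀ hc.ne').comp_injOn (injOn_sin.mono Ioo_subset_Icc_self))]
  refine setIntegral_congr_fun measurableSet_Ioo fun φ hφ => ?_
  rw [abs_of_pos (mul_pos hc (cos_pos_of_mem_Ioo hφ))]

theorem hemisphereDensity_sin_cos_mul_sin (θ φ : ℝ) :
    hemisphereDensity ⟨sin θ, cos θ * sin φ⟩ = |cos θ * cos φ|⁻¹ := by
  rw [hemisphereDensity_mk, ← sqrt_sq_eq_abs]
  congr 2
  linear_combination -(sin_sq_add_cos_sq θ) - cos θ ^ 2 * sin_sq_add_cos_sq φ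

theorem integral_cos_smul_comp_eq_integral_hemisphereDensity_smul {E : Type*}
    [NormedAddCommGroup E] [NormedSpace ℝ E] (g : ℂ → E)
    (hg : Integrable fun w => hemisphereDensity w • g w) :
    ∫ θ in Ioo (-(π / 2)) (π / 2), ∫ φ in Ioo (-(π / 2)) (π / 2), cos θ • g ⟨sin θ, cos θ * sin φ⟩
      = ∫ w, hemisphereDensity w • g w := by
  set G : ℝ → E := fun z => ∫ y, hemisphereDensity ⟨z, y⟩ • g ⟨z, y⟩
  have hinner : ∀ θ ∈ Ioo (-(π / 2)) (π / 2),
      ∫ φ in Ioo (-(π / 2)) (π / 2), cos θ • g ⟨sin θ, cos θ * sin φ⟩ = cos θ • G (sin θ) := by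
    intro θ hθ
    have hc := cos_pos_of_mem_Ioo hθ
    have hvanish : ∀ y ∉ Ioo (-cos θ) (cos θ),
        hemisphereDensity ⟨sin θ, y⟩ • g ⟨sin θ, y⟩ = 0 := by
      intro y hy
      rw [hemisphereDensity_mk, ← cos_sq', inv_sqrt_sq_sub_sq_eq_zero hc hy, zero_smul]
    rw [show G (sin θ) = _ from (setIntegral_eq_integral_of_forall_compl_eq_zero hvanish).symm,
      ← integral_smul, ← integral_Ioo_mul_cos_smul_comp_mul_sin hc]
    refine setIntegral_congr_fun measurableSet_Ioo fun φ hφ => ?_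
    have hcφ := mul_pos hc (cos_pos_of_mem_Ioo hφ)
    rw [hemisphereDensity_sin_cos_mul_sin, abs_of_pos hcφ, smul_smul, smul_smul,
      mul_right_comm, mul_inv_cancel₀ hcφ.ne', one_mul]
  have hG : ∀ z ∉ Ioo (-1) 1, G z = 0 := fun z hz => by
    simp only [G, hemisphereDensity_mk_of_notMem hz, zero_smul, integral_zero]
  have houter := integral_Ioo_mul_cos_smul_comp_mul_sin one_pos G
  simp only [one_mul] at houter
  rw [setIntegral_congr_fun measurableSet_Ioo hinner, houter,
    setIntegral_eq_integral_of_forall_compl_eq_zero hG, integral_complex_eq_integral_integral hg]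

theorem integral_smul_exp_inner_map_of_invariant {E : Type*} [NormedAddCommGroup E]
    [InnerProductSpace ℝ E] [FiniteDimensional ℝ E] [MeasurableSpace E] [BorelSpace E]
    {g : E → ℝ} (L : E ≃ₗᵢ[ℝ] E) (hg : ∀ x, g (L x) = g x) (v : E) :
    ∫ x, g x • Complex.exp (⟪L v, x⟫ * Complex.I)
      = ∫ x, g x • Complex.exp (⟪v, x⟫ * Complex.I) := by
  rw [← L.measurePreserving.integral_comp L.toHomeomorph.measurableEmbedding]
  simp_rw [hg, LinearIsometryEquiv.inner_map_map]

theorem integral_hemisphereDensity_smul_exp_mul_re (r : ℝ) :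
    ∫ w, hemisphereDensity w • Complex.exp ((r * w.re : ℝ) * Complex.I)
      = 2 * π * (Real.sinc r : ℂ) := by
  rw [integral_complex_eq_integral_integral
    (integrable_hemisphereDensity_smul_exp_mul_I (by fun_prop))]
  simp_rw [integral_smul_const, integral_hemisphereDensity_mk]
  rw [← setIntegral_eq_integral_of_forall_compl_eq_zero fun z hz => by
      rw [indicator_of_notMem hz, zero_smul],
    setIntegral_congr_fun measurableSet_Ioo fun z hz => by rw [indicator_of_mem hz],
    integral_smul, integral_Ioo_exp_mul_I, Complex.real_smul]
  ring

theorem integral_hemisphereDensity_smul_exp_inner (v : ℂ) :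
    ∫ w, hemisphereDensity w • Complex.exp (⟪v, w⟫ * Complex.I)
      = 2 * π * (Real.sinc ‖v‖ : ℂ) := by
  have hrot : rotation (Circle.exp (Complex.arg v)) (‖v‖ : ℂ) = v := by
    rw [rotation_apply, Circle.coe_exp, mul_comm, Complex.norm_mul_exp_arg_mul_I]
  have hradial : ∀ w, hemisphereDensity (rotation (Circle.exp (Complex.arg v)) w)
      = hemisphereDensity w := fun w => by
    rw [hemisphereDensity, LinearIsometryEquiv.norm_map, hemisphereDensity]
  nth_rw 1 [← hrot]
  rw [integral_smul_exp_inner_map_of_invariant _ hradial,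
    ← integral_hemisphereDensity_smul_exp_mul_re]
  simp_rw [Complex.inner, Complex.conj_ofReal, Complex.re_mul_ofReal, mul_comm]

theorem integral_withDensity_cos_indicator {E : Type*} [NormedAddCommGroup E] [NormedSpace ℝ E]
    {F : ℝ × ℝ → E} (hF : Continuous F) :
    ∫ p, F p ∂(volume : Measure (ℝ × ℝ)).withDensity (fun p => ENNReal.ofReal
        ((Icc (-(π / 2)) (π / 2) ×ˢ Icc (-(π / 2)) (π / 2)).indicator
          (fun q => cos q.1 / (2 * π)) p))
      = (2 * π)⁻¹ •
        ∫ θ in Ioo (-(π / 2)) (π / 2), ∫ φ in Ioo (-(π / 2)) (π / 2), cos θ • F (θ, φ) := by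
  set S := Icc (-(π / 2)) (π / 2) ×ˢ Icc (-(π / 2)) (π / 2)
  have hS : MeasurableSet S := measurableSet_Icc.prod measurableSet_Icc
  have hdensity : ∀ p, (ENNReal.ofReal (S.indicator (fun q => cos q.1 / (2 * π)) p)).toReal • F p
      = S.indicator (fun q => (2 * π)⁻¹ • cos q.1 • F q) p := by
    intro p
    by_cases hp : p ∈ S
    · rw [indicator_of_mem hp, indicator_of_mem hp, ENNReal.toReal_ofReal
        (div_nonneg (cos_nonneg_of_mem_Icc hp.1) (by positivity)), smul_smul, div_eq_inv_mul]
    · rw [indicator_of_notMem hp, indicator_of_notMem hp, ENNReal.ofReal_zero, ENNReal.toReal_zero,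
        zero_smul]
  have hint : IntegrableOn (fun q : ℝ × ℝ => cos q.1 • F q) S (volume.prod volume) :=
    (by fun_prop : Continuous fun q : ℝ × ℝ => cos q.1 • F q).continuousOn.integrableOn_compact
      (isCompact_Icc.prod isCompact_Icc)
  rw [integral_withDensity_eq_integral_toReal_smul (by fun_prop)
    (.of_forall fun _ => ENNReal.ofReal_lt_top)]
  simp_rw [hdensity]
  rw [integral_indicator hS, integral_smul, Measure.volume_eq_prod, setIntegral_prod _ hint]
  simp only [integral_Icc_eq_integral_Ioo]

theorem sinc_eq_real_sinc (x : ℝ) : _root_.sinc x = Real.sinc x := rfl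

theorem sinc_abs (x : ℝ) : Real.sinc |x| = Real.sinc x := by
  rcases abs_choice x with h | h <;> rw [h]
  exact Real.sinc_neg x

noncomputable def projYZ (x : EuclideanSpace ℝ (Fin 3)) : ℂ := ⟨x 2, x 1⟩

theorem inner_dirVec_eq_inner_projYZ {x : EuclideanSpace ℝ (Fin 3)} (hx : x 0 = 0) (θ φ : ℝ) :
    ⟪dirVec θ φ, x⟫ = ⟪projYZ x, ⟨sin θ, cos θ * sin φ⟩⟫ := by
  simp [dirVec, projYZ, PiLp.inner_apply, Fin.sum_univ_three, Complex.inner, hx]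
  ring

theorem norm_projYZ {x : EuclideanSpace ℝ (Fin 3)} (hx : x 0 = 0) : ‖projYZ x‖ = ‖x‖ := by
  rw [EuclideanSpace.norm_eq, Fin.sum_univ_three, hx, Complex.norm_def, Complex.normSq_mk, projYZ]
  simp only [Real.norm_eq_abs, sq_abs]
  ring_nf

theorem steering_mul_conj {N : ℕ} (κ : ℝ) (u : Fin N → EuclideanSpace ℝ (Fin 3)) (θ φ : ℝ)
    (m n : Fin N) :
    steering κ u θ φ m * starRingEnd ℂ (steering κ u θ φ n)
      = Complex.exp (⟪dirVec θ φ, κ • (u m - u n)⟫ * Complex.I) := by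
  rw [steering, steering, ← Complex.exp_conj, ← Complex.exp_add, inner_smul_right, inner_sub_right]
  congr 1
  simp only [map_mul, Complex.conj_I, Complex.conj_ofReal]
  push_cast
  ring

theorem steering_vector_correlation_isotropic_halfspace_general
    {Ω : Type*} [MeasurableSpace Ω] (P : Measure Ω)
    (Ψ : Ω → ℝ × ℝ) (hΨmeas : Measurable Ψ)
    (hΨ : P.map Ψ = (volume : Measure (ℝ × ℝ)).withDensity (fun p =>
      ENNReal.ofReal (Set.indicator
        (Set.Icc (-(π / 2)) (π / 2) ×ˢ Set.Icc (-(π / 2)) (π / 2))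
        (fun q => Real.cos q.1 / (2 * π)) p)))
    {N : ℕ} (u : Fin N → EuclideanSpace ℝ (Fin 3)) (hu : ∀ i, u i 0 = 0)
    (κ : ℝ) (m n : Fin N) :
    ∫ ω, steering κ u (Ψ ω).1 (Ψ ω).2 m *
        (starRingEnd ℂ) (steering κ u (Ψ ω).1 (Ψ ω).2 n) ∂P
      = (_root_.sinc (κ * ‖u m - u n‖) : ℂ) := by
  set x := κ • (u m - u n)
  have hx : x 0 = 0 := by simp [x, hu]
  set F : ℝ × ℝ → ℂ := fun p =>
    Complex.exp (⟪projYZ x, ⟨sin p.1, cos p.1 * sin p.2⟩⟫ * Complex.I)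
  have hF : Continuous F := by
    have hmk : Continuous fun p : ℝ × ℝ => (⟨sin p.1, cos p.1 * sin p.2⟩ : ℂ) :=
      Complex.equivRealProdCLM.symm.continuous.comp
        (show Continuous fun p : ℝ × ℝ => (sin p.1, cos p.1 * sin p.2) by fun_prop)
    fun_prop
  have hcorr : ∀ ω, steering κ u (Ψ ω).1 (Ψ ω).2 m *
      starRingEnd ℂ (steering κ u (Ψ ω).1 (Ψ ω).2 n) = F (Ψ ω) := fun ω => by
    rw [steering_mul_conj, inner_dirVec_eq_inner_projYZ hx]
  simp_rw [hcorr]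
  rw [← integral_map hΨmeas.aemeasurable hF.aestronglyMeasurable, hΨ,
    integral_withDensity_cos_indicator hF,
    integral_cos_smul_comp_eq_integral_hemisphereDensity_smul _
      (integrable_hemisphereDensity_smul_exp_mul_I (by fun_prop)),
    integral_hemisphereDensity_smul_exp_inner, norm_projYZ hx, norm_smul, Real.norm_eq_abs,
    sinc_eq_real_sinc, ← sinc_abs (κ * _), abs_mul, abs_norm, Complex.real_smul]
  push_cast
  field_simp

theorem steering_vector_correlation_isotropic_halfspace
    {Ω : Type*} [MeasurableSpace Ω] (P : Measure Ω) [IsProbabilityMeasure P]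
    (Ψ : Ω → ℝ × ℝ) (hΨmeas : Measurable Ψ)
    (hΨ : P.map Ψ = (volume : Measure (ℝ × ℝ)).withDensity (fun p =>
      ENNReal.ofReal (Set.indicator
        (Set.Icc (-(π / 2)) (π / 2) ×ˢ Set.Icc (-(π / 2)) (π / 2))
        (fun q => Real.cos q.1 / (2 * π)) p)))
    {N : ℕ} (u : Fin N → EuclideanSpace ℝ (Fin 3)) (hu : ∀ i, u i 0 = 0)
    (lam : ℝ) (hlam : 0 < lam) (κ : ℝ) (hκ : κ = 2 * π / lam) (m n : Fin N) :
    ∫ ω, steering κ u (Ψ ω).1 (Ψ ω).2 m *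
        (starRingEnd ℂ) (steering κ u (Ψ ω).1 (Ψ ω).2 n) ∂P
      = (_root_.sinc (κ * ‖u m - u n‖) : ℂ) :=
  steering_vector_correlation_isotropic_halfspace_general P Ψ hΨmeas hΨ u hu κ m n
end
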